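/- Conversely, for every character ψ of I and every i ∈ I with ψ(i) = 1, the functional (a,j) ↦ ψ(θ(a)i) + ψ(j) is a character of A ⋈^θ I; and for every character φ of A, the functional (a,j) ↦ φ(a) is a character of A ⋈^θ I. -/

import Mathlib

/-! If `ψ` is multiplicative on the ideal `I` and `ψ e = 1`, then inserting the factor `ψ e` and
reassociating gives `ψ (e * b) = ψ (e * b * e) = ψ (b * e)`, hence `ψ (b * j) = χ b * ψ j` and
`ψ (j * b) = ψ j * χ b` for `χ b := ψ (b * e)`, and `χ` is multiplicative on all of `B`.
Expanding `(a, j) · (a', j')` then factors `χ (θ (a * a')) + ψ (θ a * j' + j * θ a' + j * j')` as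
`(χ (θ a) + ψ j) * (χ (θ a') + ψ j')`. -/

noncomputable def amul {A B : Type*} [NonUnitalNormedRing A] [NormedSpace ℂ A]
    [NonUnitalNormedRing B] [NormedSpace ℂ B]
    (θ : A →L[ℂ] B) {I : Submodule ℂ B}
    (hIl : ∀ b i : B, i ∈ I → b * i ∈ I) (hIr : ∀ b i : B, i ∈ I → i * b ∈ I)
    (x y : A × I) : A × I :=
  (x.1 * y.1,
    ⟨θ x.1 * (y.2 : B) + (x.2 : B) * θ y.1 + (x.2 : B) * (y.2 : B),
      I.add_mem (I.add_mem (hIl _ _ y.2.2) (hIr _ _ x.2.2)) (hIr _ _ x.2.2)⟩)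

open NormedSpace

section IdealCharacter

variable {R B M : Type*} [Semiring R] [NonUnitalSemiring B] [Module R B] [MulOneClass M]
  {I : Submodule R B}

theorem map_mul_left_of_map_eq_one (hIl : ∀ b i : B, i ∈ I → b * i ∈ I)
    (hIr : ∀ b i : B, i ∈ I → i * b ∈ I) {ψ : I → M}
    (hψ : ∀ i j : I, ψ ⟨(i : B) * (j : B), hIr _ _ i.2⟩ = ψ i * ψ j) {e : I} (he : ψ e = 1)
    (b : B) (j : I) :
    ψ ⟨b * j, hIl b j j.2⟩ = ψ ⟨b * e, hIl b e e.2⟩ * ψ j := by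
  have h_swap : ψ ⟨e * b, hIr b e e.2⟩ = ψ ⟨b * e, hIl b e e.2⟩ :=
    calc ψ ⟨e * b, hIr b e e.2⟩
        = ψ ⟨e * b, hIr b e e.2⟩ * ψ e := by rw [he, mul_one]
      _ = ψ ⟨e * (b * e), hIr _ _ e.2⟩ := by rw [← hψ]; simp only [mul_assoc]
      _ = ψ ⟨b * e, hIl b e e.2⟩ := by rw [hψ e ⟨b * e, hIl b e e.2⟩, he, one_mul]
  calc ψ ⟨b * j, hIl b j j.2⟩
      = ψ ⟨e * (b * j), hIr _ _ e.2⟩ := by rw [hψ e ⟨b * j, hIl b j j.2⟩, he, one_mul]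
    _ = ψ ⟨e * b, hIr b e e.2⟩ * ψ j := by rw [← hψ]; simp only [mul_assoc]
    _ = ψ ⟨b * e, hIl b e e.2⟩ * ψ j := by rw [h_swap]

theorem map_mul_right_of_map_eq_one (hIl : ∀ b i : B, i ∈ I → b * i ∈ I)
    (hIr : ∀ b i : B, i ∈ I → i * b ∈ I) {ψ : I → M}
    (hψ : ∀ i j : I, ψ ⟨(i : B) * (j : B), hIr _ _ i.2⟩ = ψ i * ψ j) {e : I} (he : ψ e = 1)
    (b : B) (j : I) :
    ψ ⟨j * b, hIr b j j.2⟩ = ψ j * ψ ⟨b * e, hIl b e e.2⟩ :=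
  calc ψ ⟨j * b, hIr b j j.2⟩
      = ψ ⟨j * b, hIr b j j.2⟩ * ψ e := by rw [he, mul_one]
    _ = ψ j * ψ ⟨b * e, hIl b e e.2⟩ := by
      rw [← hψ, ← hψ]; simp only [mul_assoc]

theorem map_mul_mul_of_map_eq_one (hIl : ∀ b i : B, i ∈ I → b * i ∈ I)
    (hIr : ∀ b i : B, i ∈ I → i * b ∈ I) {ψ : I → M}
    (hψ : ∀ i j : I, ψ ⟨(i : B) * (j : B), hIr _ _ i.2⟩ = ψ i * ψ j) {e : I} (he : ψ e = 1)
    (b c : B) :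
    ψ ⟨b * c * e, hIl _ e e.2⟩ = ψ ⟨b * e, hIl b e e.2⟩ * ψ ⟨c * e, hIl c e e.2⟩ := by
  rw [← map_mul_left_of_map_eq_one hIl hIr hψ he b ⟨c * e, hIl c e e.2⟩]
  simp only [mul_assoc]

end IdealCharacter

section Amalgamation

variable {A B : Type*} [NonUnitalNormedRing A] [NormedSpace ℂ A]
  [NonUnitalNormedRing B] [NormedSpace ℂ B] [IsScalarTower ℂ B B] {I : Submodule ℂ B}

noncomputable def amalgamationChar (θ : A →L[ℂ] B) (hIl : ∀ b i : B, i ∈ I → b * i ∈ I)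
    (ψ : StrongDual ℂ I) (e : I) : StrongDual ℂ (A × I) :=
  ψ.comp ((ContinuousLinearMap.mk (LinearMap.mulRight ℂ (e : B)) (continuous_mul_const _)
      ∘L θ ∘L .fst ℂ A I).codRestrict I fun _ => hIl _ _ e.2) +
    ψ ∘L .snd ℂ A I

theorem amalgamationChar_apply (θ : A →L[ℂ] B) (hIl : ∀ b i : B, i ∈ I → b * i ∈ I)
    (ψ : StrongDual ℂ I) (e : I) (p : A × I) :
    amalgamationChar θ hIl ψ e p = ψ ⟨θ p.1 * e, hIl _ e e.2⟩ + ψ p.2 :=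
  rfl

theorem amalgamationChar_map_amul (θ : A →L[ℂ] B) (hθ : ∀ x y : A, θ (x * y) = θ x * θ y)
    (hIl : ∀ b i : B, i ∈ I → b * i ∈ I) (hIr : ∀ b i : B, i ∈ I → i * b ∈ I)
    {ψ : StrongDual ℂ I} (hψ : ∀ i j : I, ψ ⟨(i : B) * (j : B), hIr _ _ i.2⟩ = ψ i * ψ j)
    {e : I} (he : ψ e = 1) (x y : A × I) :
    amalgamationChar θ hIl ψ e (amul θ hIl hIr x y) =
      amalgamationChar θ hIl ψ e x * amalgamationChar θ hIl ψ e y := by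
  obtain ⟨a, j⟩ := x
  obtain ⟨a', j'⟩ := y
  have h_split : (amul θ hIl hIr (a, j) (a', j')).2 =
      ⟨θ a * j', hIl _ _ j'.2⟩ + ⟨j * θ a', hIr _ _ j.2⟩ + ⟨j * j', hIr _ _ j.2⟩ := rfl
  simp only [amalgamationChar_apply, h_split, map_add]
  rw [show (amul θ hIl hIr (a, j) (a', j')).1 = a * a' from rfl, hθ,
    map_mul_mul_of_map_eq_one hIl hIr hψ he, map_mul_left_of_map_eq_one hIl hIr hψ he _ j',
    map_mul_right_of_map_eq_one hIl hIr hψ he _ j, hψ j j']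
  ring

theorem amalgamationChar_apply_zero_self (θ : A →L[ℂ] B) (hIl : ∀ b i : B, i ∈ I → b * i ∈ I)
    {ψ : StrongDual ℂ I} {e : I} (he : ψ e = 1) :
    amalgamationChar θ hIl ψ e (0, e) = 1 := by
  have h_zero : (⟨θ 0 * e, hIl _ e e.2⟩ : I) = 0 := by ext; simp
  rw [amalgamationChar_apply, h_zero, map_zero, he, zero_add]

end Amalgamation

theorem amalgamation_char_converse {A B : Type*} [NonUnitalNormedRing A]
    [NormedSpace ℂ A]
    [NonUnitalNormedRing B] [NormedSpace ℂ B]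
    [IsScalarTower ℂ B B]
    (θ : A →L[ℂ] B) (hθ : ∀ x y : A, θ (x * y) = θ x * θ y)
    (I : Submodule ℂ B)
    (hIl : ∀ b i : B, i ∈ I → b * i ∈ I) (hIr : ∀ b i : B, i ∈ I → i * b ∈ I) :
    (∀ (ψ : StrongDual ℂ I),
      (∀ i j : I, ψ ⟨(i : B) * (j : B), hIr _ _ i.2⟩ = ψ i * ψ j) → ψ ≠ 0 →
      ∀ i : I, ψ i = 1 →
        (∀ x y : A × I,
          (fun p : A × I => ψ ⟨θ p.1 * (i : B), hIl _ _ i.2⟩ + ψ p.2) (amul θ hIl hIr x y)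
            = (fun p : A × I => ψ ⟨θ p.1 * (i : B), hIl _ _ i.2⟩ + ψ p.2) x *
              (fun p : A × I => ψ ⟨θ p.1 * (i : B), hIl _ _ i.2⟩ + ψ p.2) y) ∧
        (fun p : A × I => ψ ⟨θ p.1 * (i : B), hIl _ _ i.2⟩ + ψ p.2) ≠ 0 ∧
        Continuous (fun p : A × I => ψ ⟨θ p.1 * (i : B), hIl _ _ i.2⟩ + ψ p.2) ∧
        IsLinearMap ℂ (fun p : A × I => ψ ⟨θ p.1 * (i : B), hIl _ _ i.2⟩ + ψ p.2)) ∧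
    (∀ (φ : StrongDual ℂ A), (∀ a a' : A, φ (a * a') = φ a * φ a') → φ ≠ 0 →
        (∀ x y : A × I,
          (fun p : A × I => φ p.1) (amul θ hIl hIr x y)
            = (fun p : A × I => φ p.1) x * (fun p : A × I => φ p.1) y) ∧
        (fun p : A × I => φ p.1) ≠ 0 ∧
        Continuous (fun p : A × I => φ p.1) ∧
        IsLinearMap ℂ (fun p : A × I => φ p.1)) := by
  refine ⟨fun ψ hψ _ e he => ?_, fun φ hφ hφ0 => ?_⟩
  · let F := amalgamationChar θ hIl ψ e
    refine ⟨amalgamationChar_map_amul θ hθ hIl hIr hψ he, fun h => ?_, F.continuous,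
      F.toLinearMap.isLinear⟩
    exact one_ne_zero <|
      (amalgamationChar_apply_zero_self θ hIl he).symm.trans (congrFun h (0, e))
  · refine ⟨fun x y => hφ x.1 y.1, fun h => hφ0 ?_, (φ ∘L .fst ℂ A I).continuous,
      (φ ∘L .fst ℂ A I).toLinearMap.isLinear⟩
    ext a
    exact congrFun h (a, 0)
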